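/- arXiv:2303.08045 — 3 statements merged into one kernel-verified Lean document; each statement's English description precedes it below -/
import Mathlib

section
/- The negative entropy h*(y) = ⟨y, log y⟩ is 1-strongly convex on the unit simplex with respect to the Euclidean norm: for all x, y ∈ Δ_d with x having strictly positive components, ⟨y, log y⟩ ≥ ⟨x, log x⟩ + ⟨log x + 𝟏_d, y − x⟩ + (1/2)‖y − x‖_2². -/
open Real

private lemma key_pointwise {x : ℝ} (hx0 : 0 < x) (hx1 : x ≤ 1) {y : ℝ}
    (hy0 : 0 ≤ y) (hy1 : y ≤ 1) :
    x * Real.log x + (Real.log x + 1) * (y - x) + (y - x) ^ 2 / 2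
      ≤ y * Real.log y := by
  set F : ℝ → ℝ := fun t =>
    t * Real.log t - (x * Real.log x + (Real.log x + 1) * (t - x) + (t - x) ^ 2 / 2) with hF
  have hderiv : ∀ t : ℝ, 0 < t →
      HasDerivAt F (Real.log t - Real.log x - (t - x)) t := by
    intro t ht
    have h1 : HasDerivAt (fun t : ℝ => t * Real.log t) (Real.log t + 1) t :=
      Real.hasDerivAt_mul_log ht.ne'
    have h2 : HasDerivAt (fun t : ℝ =>
        x * Real.log x + (Real.log x + 1) * (t - x) + (t - x) ^ 2 / 2)
        (0 + (Real.log x + 1) * 1 + 2 * (t - x) * 1 / 2) t := by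
      have ha : HasDerivAt (fun t : ℝ => t - x) 1 t := (hasDerivAt_id t).sub_const x
      have hb : HasDerivAt (fun t : ℝ => (Real.log x + 1) * (t - x))
          ((Real.log x + 1) * 1) t := ha.const_mul _
      have hc : HasDerivAt (fun t : ℝ => (t - x) ^ 2) (2 * (t - x) ^ 1 * 1) t :=
        ha.pow 2
      have hd := ((hasDerivAt_const t (x * Real.log x)).add hb).add (hc.div_const 2)
      exact hd.congr_deriv (by ring)
    have := h1.sub h2
    exact this.congr_deriv (by ring)
  have hFx : F x = 0 := by simp [hF]
  have hcont : ∀ a b : ℝ, 0 < a → ContinuousOn F (Set.Icc a b) := by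
    intro a b ha
    intro t ht
    exact (hderiv t (lt_of_lt_of_le ha ht.1)).continuousAt.continuousWithinAt
  have hgoal : 0 ≤ F y := by
    rcases eq_or_lt_of_le hy0 with h0 | hy0'
    · -- y = 0
      have : F 0 = x - x ^ 2 / 2 := by simp [hF]; ring
      rw [← h0, this]
      nlinarith
    · rcases le_total x y with hxy | hxy
      · -- x ≤ y : F monotone on Icc x 1
        have hmono : MonotoneOn F (Set.Icc x 1) := by
          apply monotoneOn_of_deriv_nonneg (convex_Icc x 1) (hcont x 1 hx0)
          · intro t ht
            rw [interior_Icc] at ht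
            exact (hderiv t (lt_trans hx0 ht.1)).differentiableAt.differentiableWithinAt
          · intro t ht
            rw [interior_Icc] at ht
            have ht0 : 0 < t := lt_trans hx0 ht.1
            rw [(hderiv t ht0).deriv]
            -- log t - log x ≥ t - x for x ≤ t ≤ 1
            have h1 : Real.log (x / t) ≤ x / t - 1 :=
              Real.log_le_sub_one_of_pos (by positivity)
            rw [Real.log_div hx0.ne' ht0.ne'] at h1
            have h2 : x / t - 1 = -((t - x) / t) := by field_simp; ring
            rw [h2] at h1
            have h3 : t - x ≤ (t - x) / t := by
              rw [le_div_iff₀ ht0]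
              nlinarith [ht.2, ht.1]
            linarith
        have := hmono (Set.mem_Icc.mpr ⟨le_refl x, hx1⟩)
          (Set.mem_Icc.mpr ⟨hxy, hy1⟩) hxy
        linarith [hFx ▸ this]
      · -- y ≤ x : F antitone on Icc y x
        have hanti : AntitoneOn F (Set.Icc y x) := by
          apply antitoneOn_of_deriv_nonpos (convex_Icc y x) (hcont y x hy0')
          · intro t ht
            rw [interior_Icc] at ht
            exact (hderiv t (lt_trans hy0' ht.1)).differentiableAt.differentiableWithinAt
          · intro t ht
            rw [interior_Icc] at ht
            have ht0 : 0 < t := lt_trans hy0' ht.1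
            rw [(hderiv t ht0).deriv]
            -- log t - log x ≤ t - x for 0 < t ≤ x ≤ 1
            have h1 : Real.log (t / x) ≤ t / x - 1 :=
              Real.log_le_sub_one_of_pos (by positivity)
            rw [Real.log_div ht0.ne' hx0.ne'] at h1
            have h2 : t / x - 1 = (t - x) / x := by field_simp
            rw [h2] at h1
            have h3 : (t - x) / x ≤ t - x := by
              rw [div_le_iff₀ hx0]
              nlinarith [ht.2]
            linarith
        have := hanti (Set.mem_Icc.mpr ⟨le_refl y, hxy⟩)
          (Set.mem_Icc.mpr ⟨hxy, le_refl x⟩) hxy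
        linarith [hFx ▸ this]
  simp only [hF] at hgoal
  linarith

/-- The negative entropy `h*(y) = ⟨y, log y⟩` is 1-strongly convex on the
unit simplex w.r.t. the Euclidean norm: for all `x, y ∈ Δ_d` with `x` strictly positive,
`⟨y, log y⟩ ≥ ⟨x, log x⟩ + ⟨log x + 𝟏, y − x⟩ + (1/2)‖y − x‖₂²`. -/
theorem negEntropy_one_strongly_convex_on_simplex
    {d : ℕ} (x y : Fin d → ℝ)
    (hx : x ∈ stdSimplex ℝ (Fin d)) (hy : y ∈ stdSimplex ℝ (Fin d))
    (hxpos : ∀ i, 0 < x i) :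
    ∑ i, y i * Real.log (y i)
      ≥ (∑ i, x i * Real.log (x i))
        + (∑ i, (Real.log (x i) + 1) * (y i - x i))
        + (1 / 2) * ∑ i, (y i - x i) ^ 2 := by
  have hx1 : ∀ i, x i ≤ 1 := by
    intro i
    calc x i ≤ ∑ j, x j := Finset.single_le_sum (fun j _ => hx.1 j) (Finset.mem_univ i)
    _ = 1 := hx.2
  have hy1 : ∀ i, y i ≤ 1 := by
    intro i
    calc y i ≤ ∑ j, y j := Finset.single_le_sum (fun j _ => hy.1 j) (Finset.mem_univ i)
    _ = 1 := hy.2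
  have hsum : ∀ i : Fin d,
      x i * Real.log (x i) + (Real.log (x i) + 1) * (y i - x i) + (y i - x i) ^ 2 / 2
        ≤ y i * Real.log (y i) :=
    fun i => key_pointwise (hxpos i) (hx1 i) (hy.1 i) (hy1 i)
  have h := Finset.sum_le_sum (fun i (_ : i ∈ Finset.univ) => hsum i)
  rw [ge_iff_le]
  calc (∑ i, x i * Real.log (x i)) + (∑ i, (Real.log (x i) + 1) * (y i - x i))
        + (1 / 2) * ∑ i, (y i - x i) ^ 2
      = ∑ i, (x i * Real.log (x i) + (Real.log (x i) + 1) * (y i - x i)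
          + (y i - x i) ^ 2 / 2) := by
        rw [Finset.mul_sum, ← Finset.sum_add_distrib, ← Finset.sum_add_distrib]
        apply Finset.sum_congr rfl
        intro i _
        ring
  _ ≤ ∑ i, y i * Real.log (y i) := h
end

section
/- Let θ > 0, let W ∈ ℝ^{m×m} be a symmetric matrix, let A_1, …, A_m ∈ ℝ^{n×d}, and let b ∈ ℝ^{mn}. Set 𝐖 = W ⊗ I_d ∈ ℝ^{md×md} and 𝐀 = diag[A_1, …, A_m] ∈ ℝ^{mn×md}. Define H(z, s) = ⟨s, b⟩ + Σ_{i=1}^m θ·log( Σ_{j=1}^d exp( −(1/θ)·(𝐖z + 𝐀^⊤ s)_{(i−1)d+j} ) ) for z ∈ ℝ^{md}, s ∈ ℝ^{mn}. Then the gradient of H (with respect to the joint variable q = (z, s) ∈ ℝ^{md+mn}) is Lipschitz continuous with constant L_H = m·(σ_max²(𝒜) + σ_max²(W))/θ in the Euclidean norm, where σ_max(𝒜) = max_{i=1,…,m} σ_max(A_i). -/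
open scoped Kronecker Matrix

/-- The largest singular value of a real matrix, i.e. the operator norm of the induced
linear map between Euclidean spaces. -/
noncomputable def sigmaMax {α β : Type*} [Fintype α] [Fintype β] [DecidableEq β]
    (C : Matrix α β ℝ) : ℝ :=
  ‖LinearMap.toContinuousLinearMap (Matrix.toEuclideanLin C)‖



open Finset
section LSE
variable {E : Type*} [NormedAddCommGroup E] [NormedSpace ℝ E]
variable {I J : Type*} [Fintype I] [Fintype J]

noncomputable def sVal (θ : ℝ) (Λ : I → J → E →L[ℝ] ℝ) (i : I) (v : E) : ℝ :=
  ∑ j, Real.exp (-(1 / θ) * Λ i j v)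
noncomputable def sDer (θ : ℝ) (Λ : I → J → E →L[ℝ] ℝ) (i : I) (v : E) : E →L[ℝ] ℝ :=
  ∑ j, Real.exp (-(1 / θ) * Λ i j v) • ((-(1 / θ)) • Λ i j)
noncomputable def nVal (θ : ℝ) (Λ : I → J → E →L[ℝ] ℝ) (w₂ : E) (i : I) (v : E) : ℝ :=
  ∑ j, Real.exp (-(1 / θ) * Λ i j v) * Λ i j w₂
noncomputable def nDer (θ : ℝ) (Λ : I → J → E →L[ℝ] ℝ) (w₂ : E) (i : I) (v : E) :
    E →L[ℝ] ℝ :=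
  ∑ j, Λ i j w₂ • (Real.exp (-(1 / θ) * Λ i j v) • ((-(1 / θ)) • Λ i j))
noncomputable def dFun (θ : ℝ) (Λ : I → J → E →L[ℝ] ℝ) (bL : E →L[ℝ] ℝ) (v : E) :
    E →L[ℝ] ℝ :=
  bL + ∑ i, θ • ((sVal θ Λ i v)⁻¹ • sDer θ Λ i v)

omit [Fintype I] in
lemma sVal_pos [Nonempty J] (θ : ℝ) (Λ : I → J → E →L[ℝ] ℝ) (i : I) (v : E) :
    0 < sVal θ Λ i v :=
  Finset.sum_pos (fun _ _ => Real.exp_pos _) Finset.univ_nonempty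

omit [Fintype I] in
lemma hasFDerivAt_sVal (θ : ℝ) (Λ : I → J → E →L[ℝ] ℝ) (i : I) (v : E) :
    HasFDerivAt (sVal θ Λ i) (sDer θ Λ i v) v := by
  apply HasFDerivAt.fun_sum
  intro j _
  exact (Real.hasDerivAt_exp _).comp_hasFDerivAt v ((Λ i j).hasFDerivAt.const_mul _)

omit [Fintype I] in
lemma hasFDerivAt_nVal (θ : ℝ) (Λ : I → J → E →L[ℝ] ℝ) (w₂ : E) (i : I) (v : E) :
    HasFDerivAt (nVal θ Λ w₂ i) (nDer θ Λ w₂ i v) v := by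
  apply HasFDerivAt.fun_sum
  intro j _
  exact ((Real.hasDerivAt_exp _).comp_hasFDerivAt v
    ((Λ i j).hasFDerivAt.const_mul _)).mul_const (Λ i j w₂)

omit [Fintype I] in
lemma sDer_apply (θ : ℝ) (Λ : I → J → E →L[ℝ] ℝ) (i : I) (v w : E) :
    sDer θ Λ i v w = (-(1 / θ)) * ∑ j, Real.exp (-(1 / θ) * Λ i j v) * Λ i j w := by
  simp only [sDer, ContinuousLinearMap.sum_apply, ContinuousLinearMap.smul_apply,
    smul_eq_mul, Finset.mul_sum]
  exact Finset.sum_congr rfl fun j _ => by ring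

omit [Fintype I] in
lemma nDer_apply (θ : ℝ) (Λ : I → J → E →L[ℝ] ℝ) (w₂ : E) (i : I) (v w : E) :
    nDer θ Λ w₂ i v w
      = (-(1 / θ)) * ∑ j, Real.exp (-(1 / θ) * Λ i j v) * (Λ i j w * Λ i j w₂) := by
  simp only [nDer, ContinuousLinearMap.sum_apply, ContinuousLinearMap.smul_apply,
    smul_eq_mul, Finset.mul_sum]
  exact Finset.sum_congr rfl fun j _ => by ring

lemma hasFDerivAt_dual [Nonempty J] (θ : ℝ) (Λ : I → J → E →L[ℝ] ℝ)
    (bL : E →L[ℝ] ℝ) (v : E) :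
    HasFDerivAt (fun v => bL v + ∑ i, θ * Real.log (sVal θ Λ i v)) (dFun θ Λ bL v) v := by
  refine bL.hasFDerivAt.add (HasFDerivAt.fun_sum fun i _ => ?_)
  exact ((Real.hasDerivAt_log (sVal_pos θ Λ i v).ne').comp_hasFDerivAt v
    (hasFDerivAt_sVal θ Λ i v)).const_mul θ

lemma dFun_apply [Nonempty J] {θ : ℝ} (hθ : 0 < θ) (Λ : I → J → E →L[ℝ] ℝ)
    (bL : E →L[ℝ] ℝ) (v w₂ : E) :
    dFun θ Λ bL v w₂ = bL w₂ - ∑ i, nVal θ Λ w₂ i v * (sVal θ Λ i v)⁻¹ := by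
  simp only [dFun, ContinuousLinearMap.add_apply, ContinuousLinearMap.sum_apply,
    ContinuousLinearMap.smul_apply, smul_eq_mul, sub_eq_add_neg, ← Finset.sum_neg_distrib]
  congr 1
  refine Finset.sum_congr rfl fun i _ => ?_
  rw [sDer_apply]
  have hS := (sVal_pos θ Λ i v).ne'
  rw [nVal]
  field_simp

/-- Derivative (in `v`) of `v ↦ dFun θ Λ bL v w₂`. -/
noncomputable def gDer (θ : ℝ) (Λ : I → J → E →L[ℝ] ℝ) (w₂ : E) (v : E) : E →L[ℝ] ℝ :=
  -(∑ i, (nVal θ Λ w₂ i v • ((-((sVal θ Λ i v) ^ 2)⁻¹) • sDer θ Λ i v)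
      + (sVal θ Λ i v)⁻¹ • nDer θ Λ w₂ i v))

lemma hasFDerivAt_g [Nonempty J] (θ : ℝ) (Λ : I → J → E →L[ℝ] ℝ)
    (bL : E →L[ℝ] ℝ) (w₂ : E) (v : E) :
    HasFDerivAt (fun u => bL w₂ - ∑ i, nVal θ Λ w₂ i u * (sVal θ Λ i u)⁻¹)
      (gDer θ Λ w₂ v) v := by
  refine HasFDerivAt.const_sub (HasFDerivAt.fun_sum fun i _ => ?_) _
  exact (hasFDerivAt_nVal θ Λ w₂ i v).mul
    ((hasDerivAt_inv (sVal_pos θ Λ i v).ne').comp_hasFDerivAt v (hasFDerivAt_sVal θ Λ i v))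

lemma gDer_apply [Nonempty J] {θ : ℝ} (hθ : 0 < θ) (Λ : I → J → E →L[ℝ] ℝ)
    (w₂ : E) (v w₁ : E) :
    gDer θ Λ w₂ v w₁ = (1 / θ) * ∑ i,
      ((∑ j, (Real.exp (-(1 / θ) * Λ i j v) / sVal θ Λ i v) * (Λ i j w₁ * Λ i j w₂))
        - (∑ j, (Real.exp (-(1 / θ) * Λ i j v) / sVal θ Λ i v) * Λ i j w₁)
          * (∑ j, (Real.exp (-(1 / θ) * Λ i j v) / sVal θ Λ i v) * Λ i j w₂)) := by
  simp only [gDer, ContinuousLinearMap.neg_apply, ContinuousLinearMap.sum_apply,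
    ContinuousLinearMap.add_apply, ContinuousLinearMap.smul_apply, smul_eq_mul]
  rw [← Finset.sum_neg_distrib, Finset.mul_sum]
  refine Finset.sum_congr rfl fun i _ => ?_
  have hS := (sVal_pos θ Λ i v).ne'
  rw [sDer_apply, nDer_apply]
  have e1 : ∀ x : J → ℝ, ∑ j, (Real.exp (-(1 / θ) * Λ i j v) / sVal θ Λ i v) * x j
      = (∑ j, Real.exp (-(1 / θ) * Λ i j v) * x j) / sVal θ Λ i v := by
    intro x
    rw [Finset.sum_div]
    exact Finset.sum_congr rfl fun j _ => by ring
  rw [e1, e1, e1, nVal]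
  field_simp
  ring

end LSE

open Finset

/-- Cauchy–Schwarz with square roots: `∑ x y ≤ √(∑ x²) √(∑ y²)` for nonneg sequences. -/
lemma sum_mul_le_sqrt_mul_sqrt {ι : Type*} [Fintype ι] (x y : ι → ℝ)
    (hx : ∀ i, 0 ≤ x i) (hy : ∀ i, 0 ≤ y i) :
    ∑ i, x i * y i ≤ Real.sqrt (∑ i, x i ^ 2) * Real.sqrt (∑ i, y i ^ 2) := by
  have h := Finset.sum_mul_sq_le_sq_mul_sq Finset.univ x y
  have h0 : 0 ≤ ∑ i, x i * y i := Finset.sum_nonneg fun i _ => mul_nonneg (hx i) (hy i)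
  calc ∑ i, x i * y i = Real.sqrt ((∑ i, x i * y i) ^ 2) := (Real.sqrt_sq h0).symm
    _ ≤ Real.sqrt ((∑ i, x i ^ 2) * ∑ i, y i ^ 2) := Real.sqrt_le_sqrt h
    _ = _ := Real.sqrt_mul (Finset.sum_nonneg fun i _ => sq_nonneg _) _

/-- Covariance-type Cauchy–Schwarz bound for a probability vector `p`. -/
lemma cov_abs_le {ι : Type*} [Fintype ι] (p a b : ι → ℝ)
    (hp : ∀ j, 0 ≤ p j) (hp1 : ∑ j, p j = 1) :
    |(∑ j, p j * (a j * b j)) - (∑ j, p j * a j) * (∑ j, p j * b j)|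
      ≤ Real.sqrt (∑ j, a j ^ 2) * Real.sqrt (∑ j, b j ^ 2) := by
  set cov : (ι → ℝ) → (ι → ℝ) → ℝ :=
    fun a b => (∑ j, p j * (a j * b j)) - (∑ j, p j * a j) * (∑ j, p j * b j) with hcov
  have h1 : ∀ c : ι → ℝ, 0 ≤ cov c c := by
    intro c
    have := Finset.sum_mul_sq_le_sq_mul_sq Finset.univ
      (fun j => Real.sqrt (p j)) (fun j => Real.sqrt (p j) * c j)
    have e1 : ∀ j : ι, Real.sqrt (p j) * (Real.sqrt (p j) * c j) = p j * c j := by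
      intro j; rw [← mul_assoc, Real.mul_self_sqrt (hp j)]
    have e2 : ∀ j : ι, (Real.sqrt (p j) * c j) ^ 2 = p j * c j ^ 2 := by
      intro j; rw [mul_pow, Real.sq_sqrt (hp j)]
    have e3 : ∀ j : ι, Real.sqrt (p j) ^ 2 = p j := fun j => Real.sq_sqrt (hp j)
    simp only [e1, e2, e3, hp1, one_mul] at this
    have : (∑ j, p j * c j) * (∑ j, p j * c j) ≤ ∑ j, p j * (c j * c j) := by
      calc (∑ j, p j * c j) * (∑ j, p j * c j) = (∑ j, p j * c j) ^ 2 := (sq _).symm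
        _ ≤ ∑ j, p j * c j ^ 2 := this
        _ = ∑ j, p j * (c j * c j) := by simp_rw [sq]
    simpa [hcov] using sub_nonneg.2 this
  have h2 : ∀ c : ι → ℝ, cov c c ≤ ∑ j, c j ^ 2 := by
    intro c
    have hps : ∀ j : ι, p j ≤ 1 := by
      intro j
      calc p j ≤ ∑ k, p k := Finset.single_le_sum (fun k _ => hp k) (Finset.mem_univ j)
        _ = 1 := hp1
    have : (∑ j, p j * (c j * c j)) ≤ ∑ j, c j ^ 2 := by
      apply Finset.sum_le_sum
      intro j _
      rw [← sq]
      calc p j * c j ^ 2 ≤ 1 * c j ^ 2 := by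
            exact mul_le_mul_of_nonneg_right (hps j) (sq_nonneg _)
        _ = c j ^ 2 := one_mul _
    have hsq : 0 ≤ (∑ j, p j * c j) * (∑ j, p j * c j) := mul_self_nonneg _
    simp only [hcov]
    linarith
  -- Cauchy–Schwarz for the covariance form via the discriminant.
  have key : ∀ t : ℝ, 0 ≤ cov b b * (t * t) + (2 * cov a b) * t + cov a a := by
    intro t
    have h0 := h1 (fun j => a j + t * b j)
    have e1 : cov (fun j => a j + t * b j) (fun j => a j + t * b j)
        = cov b b * (t * t) + (2 * cov a b) * t + cov a a := by
      simp only [hcov]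
      have s1 : (∑ j, p j * ((a j + t * b j) * (a j + t * b j)))
          = (∑ j, p j * (a j * a j)) + (2 * t) * (∑ j, p j * (a j * b j))
            + (t * t) * (∑ j, p j * (b j * b j)) := by
        rw [Finset.mul_sum, Finset.mul_sum, ← Finset.sum_add_distrib, ← Finset.sum_add_distrib]
        apply Finset.sum_congr rfl
        intro j _; ring
      have s2 : (∑ j, p j * (a j + t * b j))
          = (∑ j, p j * a j) + t * (∑ j, p j * b j) := by
        rw [Finset.mul_sum, ← Finset.sum_add_distrib]
        apply Finset.sum_congr rfl
        intro j _; ring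
      rw [s1, s2]; ring
    rw [e1] at h0; exact h0
  have hdisc := discrim_le_zero key
  rw [discrim] at hdisc
  have hsq' : cov a b ^ 2 ≤ cov a a * cov b b := by nlinarith [hdisc]
  calc |cov a b| = Real.sqrt (cov a b ^ 2) := (Real.sqrt_sq_eq_abs _).symm
    _ ≤ Real.sqrt (cov a a * cov b b) := Real.sqrt_le_sqrt hsq'
    _ = Real.sqrt (cov a a) * Real.sqrt (cov b b) := Real.sqrt_mul (h1 a) _
    _ ≤ Real.sqrt (∑ j, a j ^ 2) * Real.sqrt (∑ j, b j ^ 2) := by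
        apply mul_le_mul (Real.sqrt_le_sqrt (h2 a)) (Real.sqrt_le_sqrt (h2 b))
          (Real.sqrt_nonneg _) (Real.sqrt_nonneg _)
section LSE2
variable {E : Type*} [NormedAddCommGroup E] [NormedSpace ℝ E]
variable {I J : Type*} [Fintype I] [Fintype J]

lemma gDer_norm_le [Nonempty J] {θ : ℝ} (hθ : 0 < θ) (Λ : I → J → E →L[ℝ] ℝ) (w₂ : E)
    {c : ℝ} (hc : 0 ≤ c) (hΛ : ∀ w : E, ∑ i, ∑ j, (Λ i j w) ^ 2 ≤ c * ‖w‖ ^ 2) (v : E) :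
    ‖gDer θ Λ w₂ v‖ ≤ c / θ * ‖w₂‖ := by
  refine ContinuousLinearMap.opNorm_le_bound _ (by positivity) fun w₁ => ?_
  rw [gDer_apply hθ]
  have hcov : ∀ i : I,
      |(∑ j, (Real.exp (-(1 / θ) * Λ i j v) / sVal θ Λ i v) * (Λ i j w₁ * Λ i j w₂))
        - (∑ j, (Real.exp (-(1 / θ) * Λ i j v) / sVal θ Λ i v) * Λ i j w₁)
          * (∑ j, (Real.exp (-(1 / θ) * Λ i j v) / sVal θ Λ i v) * Λ i j w₂)|
      ≤ Real.sqrt (∑ j, (Λ i j w₁) ^ 2) * Real.sqrt (∑ j, (Λ i j w₂) ^ 2) := by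
    intro i
    apply cov_abs_le
    · intro j; exact div_nonneg (Real.exp_pos _).le (sVal_pos θ Λ i v).le
    · rw [← Finset.sum_div]
      exact div_self (sVal_pos θ Λ i v).ne'
  have habs : |(1 / θ) * ∑ i,
      ((∑ j, (Real.exp (-(1 / θ) * Λ i j v) / sVal θ Λ i v) * (Λ i j w₁ * Λ i j w₂))
        - (∑ j, (Real.exp (-(1 / θ) * Λ i j v) / sVal θ Λ i v) * Λ i j w₁)
          * (∑ j, (Real.exp (-(1 / θ) * Λ i j v) / sVal θ Λ i v) * Λ i j w₂))|
      ≤ (1 / θ) * ∑ i, Real.sqrt (∑ j, (Λ i j w₁) ^ 2) * Real.sqrt (∑ j, (Λ i j w₂) ^ 2) := by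
    rw [abs_mul, abs_of_pos (by positivity : (0:ℝ) < 1 / θ)]
    refine mul_le_mul_of_nonneg_left ?_ (by positivity)
    exact (Finset.abs_sum_le_sum_abs _ _).trans (Finset.sum_le_sum fun i _ => hcov i)
  have hCS : ∑ i, Real.sqrt (∑ j, (Λ i j w₁) ^ 2) * Real.sqrt (∑ j, (Λ i j w₂) ^ 2)
      ≤ Real.sqrt (∑ i, ∑ j, (Λ i j w₁) ^ 2) * Real.sqrt (∑ i, ∑ j, (Λ i j w₂) ^ 2) := by
    have h := sum_mul_le_sqrt_mul_sqrt (fun i => Real.sqrt (∑ j, (Λ i j w₁) ^ 2))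
      (fun i => Real.sqrt (∑ j, (Λ i j w₂) ^ 2)) (fun _ => Real.sqrt_nonneg _)
      (fun _ => Real.sqrt_nonneg _)
    simpa [Real.sq_sqrt (Finset.sum_nonneg fun j _ => sq_nonneg _)] using h
  have hval : ∀ w : E, Real.sqrt (∑ i, ∑ j, (Λ i j w) ^ 2) ≤ Real.sqrt c * ‖w‖ := by
    intro w
    calc Real.sqrt (∑ i, ∑ j, (Λ i j w) ^ 2) ≤ Real.sqrt (c * ‖w‖ ^ 2) :=
          Real.sqrt_le_sqrt (hΛ w)
      _ = Real.sqrt c * ‖w‖ := by rw [Real.sqrt_mul hc, Real.sqrt_sq (norm_nonneg _)]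
  have hprod : Real.sqrt (∑ i, ∑ j, (Λ i j w₁) ^ 2) * Real.sqrt (∑ i, ∑ j, (Λ i j w₂) ^ 2)
      ≤ (Real.sqrt c * ‖w₁‖) * (Real.sqrt c * ‖w₂‖) :=
    mul_le_mul (hval w₁) (hval w₂) (Real.sqrt_nonneg _)
      (by positivity)
  calc ‖(1 / θ) * ∑ i,
      ((∑ j, (Real.exp (-(1 / θ) * Λ i j v) / sVal θ Λ i v) * (Λ i j w₁ * Λ i j w₂))
        - (∑ j, (Real.exp (-(1 / θ) * Λ i j v) / sVal θ Λ i v) * Λ i j w₁)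
          * (∑ j, (Real.exp (-(1 / θ) * Λ i j v) / sVal θ Λ i v) * Λ i j w₂))‖
      ≤ (1 / θ) * ((Real.sqrt c * ‖w₁‖) * (Real.sqrt c * ‖w₂‖)) := by
        rw [Real.norm_eq_abs]
        refine habs.trans ?_
        exact mul_le_mul_of_nonneg_left (hCS.trans hprod) (by positivity)
    _ = c / θ * ‖w₂‖ * ‖w₁‖ := by
        rw [show Real.sqrt c * ‖w₁‖ * (Real.sqrt c * ‖w₂‖)
            = (Real.sqrt c * Real.sqrt c) * (‖w₁‖ * ‖w₂‖) by ring,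
          Real.mul_self_sqrt hc]
        ring

lemma dFun_lipschitz [Nonempty J] {θ : ℝ} (hθ : 0 < θ) (Λ : I → J → E →L[ℝ] ℝ)
    (bL : E →L[ℝ] ℝ) {c : ℝ} (hc : 0 ≤ c)
    (hΛ : ∀ w : E, ∑ i, ∑ j, (Λ i j w) ^ 2 ≤ c * ‖w‖ ^ 2) (v v' : E) :
    ‖dFun θ Λ bL v - dFun θ Λ bL v'‖ ≤ c / θ * ‖v - v'‖ := by
  refine ContinuousLinearMap.opNorm_le_bound _ (by positivity) fun w₂ => ?_
  have key := convex_univ.norm_image_sub_le_of_norm_hasFDerivWithin_le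
    (f := fun u => bL w₂ - ∑ i, nVal θ Λ w₂ i u * (sVal θ Λ i u)⁻¹)
    (f' := gDer θ Λ w₂)
    (fun u _ => (hasFDerivAt_g θ Λ bL w₂ u).hasFDerivWithinAt)
    (fun u _ => gDer_norm_le hθ Λ w₂ hc hΛ u) (Set.mem_univ v') (Set.mem_univ v)
  rw [ContinuousLinearMap.sub_apply, dFun_apply hθ, dFun_apply hθ]
  refine key.trans_eq ?_
  ring
end LSE2


lemma sigmaMax_nonneg {α β : Type*} [Fintype α] [Fintype β] [DecidableEq β]
    (C : Matrix α β ℝ) : 0 ≤ sigmaMax C := norm_nonneg _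

lemma euclid_norm_sq {ι : Type*} [Fintype ι] (x : EuclideanSpace ℝ ι) :
    ‖x‖ ^ 2 = ∑ i, x i ^ 2 := by
  rw [EuclideanSpace.norm_eq, Real.sq_sqrt (Finset.sum_nonneg fun i _ => sq_nonneg _)]
  exact Finset.sum_congr rfl fun i _ => by rw [Real.norm_eq_abs, sq_abs]

lemma mulVec_sq_sum_le {α β : Type*} [Fintype α] [Fintype β] [DecidableEq β]
    (C : Matrix α β ℝ) (x : β → ℝ) :
    ∑ a, ((C *ᵥ x) a) ^ 2 ≤ sigmaMax C ^ 2 * ∑ b, (x b) ^ 2 := by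
  set X : EuclideanSpace ℝ β := (WithLp.equiv 2 (β → ℝ)).symm x with hX
  have h : ‖Matrix.toEuclideanLin C X‖ ≤ sigmaMax C * ‖X‖ := by
    have h' := (LinearMap.toContinuousLinearMap (Matrix.toEuclideanLin C)).le_opNorm X
    rwa [LinearMap.coe_toContinuousLinearMap'] at h'
  have e1 : ‖Matrix.toEuclideanLin C X‖ ^ 2 = ∑ a, ((C *ᵥ x) a) ^ 2 := by
    rw [euclid_norm_sq]; rfl
  have e2 : ‖X‖ ^ 2 = ∑ b, (x b) ^ 2 := by
    rw [euclid_norm_sq]; rfl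
  calc ∑ a, ((C *ᵥ x) a) ^ 2 = ‖Matrix.toEuclideanLin C X‖ ^ 2 := e1.symm
    _ ≤ (sigmaMax C * ‖X‖) ^ 2 := pow_le_pow_left₀ (norm_nonneg _) h 2
    _ = sigmaMax C ^ 2 * ‖X‖ ^ 2 := mul_pow _ _ _
    _ = sigmaMax C ^ 2 * ∑ b, (x b) ^ 2 := by rw [e2]

lemma sigmaMax_transpose {α β : Type*} [Fintype α] [Fintype β] [DecidableEq α] [DecidableEq β]
    (C : Matrix α β ℝ) : sigmaMax Cᵀ = sigmaMax C := by
  unfold sigmaMax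
  rw [← Matrix.conjTranspose_eq_transpose_of_trivial,
    Matrix.toEuclideanLin_conjTranspose_eq_adjoint,
    LinearMap.adjoint_toContinuousLinearMap]
  exact ContinuousLinearMap.adjoint.norm_map _

lemma sum_sq_add_le {ι : Type*} [Fintype ι] (x y : ι → ℝ) :
    ∑ i, (x i + y i) ^ 2
      ≤ (Real.sqrt (∑ i, x i ^ 2) + Real.sqrt (∑ i, y i ^ 2)) ^ 2 := by
  have hX : ∀ x : ι → ℝ, ‖((WithLp.equiv 2 (ι → ℝ)).symm x : EuclideanSpace ℝ ι)‖
      = Real.sqrt (∑ i, x i ^ 2) := by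
    intro x
    rw [EuclideanSpace.norm_eq]
    congr 1
    exact Finset.sum_congr rfl fun i _ => by rw [Real.norm_eq_abs, sq_abs]; rfl
  have h := norm_add_le ((WithLp.equiv 2 (ι → ℝ)).symm x : EuclideanSpace ℝ ι)
    ((WithLp.equiv 2 (ι → ℝ)).symm y)
  have e1 : ((WithLp.equiv 2 (ι → ℝ)).symm x + (WithLp.equiv 2 (ι → ℝ)).symm y
      : EuclideanSpace ℝ ι) = (WithLp.equiv 2 (ι → ℝ)).symm (fun i => x i + y i) := by
    ext i; rfl
  rw [e1, hX, hX, hX] at h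
  calc ∑ i, (x i + y i) ^ 2
      = Real.sqrt (∑ i, (x i + y i) ^ 2) ^ 2 :=
        (Real.sq_sqrt (Finset.sum_nonneg fun i _ => sq_nonneg _)).symm
    _ ≤ _ := pow_le_pow_left₀ (Real.sqrt_nonneg _) h 2


set_option maxHeartbeats 4000000


/-- Let `θ > 0`, `W ∈ ℝ^{m×m}` symmetric, `A_1, …, A_m ∈ ℝ^{n×d}`,
`b ∈ ℝ^{mn}`, `𝐖 = W ⊗ I_d`, `𝐀 = diag[A_1, …, A_m]`, and
`H(z, s) = ⟨s, b⟩ + ∑ i, θ log (∑ j, exp (−(1/θ)(𝐖z + 𝐀ᵀs)_{ij}))`.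
Then the gradient of `H` in the joint variable `q = (z, s)` is Lipschitz with constant
`L_H = m (σ_max²(𝒜) + σ_max²(W)) / θ`, where `σ_max(𝒜) = max_i σ_max(A_i)`. -/
theorem dual_objective_gradient_lipschitz
    {m n d : ℕ} (hm : 0 < m) (θ : ℝ) (hθ : 0 < θ)
    (W : Matrix (Fin m) (Fin m) ℝ) (hW : W.IsSymm)
    (A : Fin m → Matrix (Fin n) (Fin d) ℝ) (b : Fin m × Fin n → ℝ)
    (bigW : Matrix (Fin m × Fin d) (Fin m × Fin d) ℝ)
    (hbigW : bigW = W ⊗ₖ (1 : Matrix (Fin d) (Fin d) ℝ))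
    (bigA : Matrix (Fin m × Fin n) (Fin m × Fin d) ℝ)
    (hbigA : bigA = Matrix.of fun p q => if p.1 = q.1 then A p.1 p.2 q.2 else 0)
    (H : EuclideanSpace ℝ ((Fin m × Fin d) ⊕ (Fin m × Fin n)) → ℝ)
    (hH : H = fun v =>
      (∑ p : Fin m × Fin n, v (Sum.inr p) * b p) +
      ∑ i : Fin m, θ * Real.log (∑ j : Fin d, Real.exp (-(1 / θ) *
        ((bigW *ᵥ (fun p => v (Sum.inl p))) (i, j) +
         (bigAᵀ *ᵥ (fun p => v (Sum.inr p))) (i, j))))) :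
    Differentiable ℝ H ∧
    ∀ v v' : EuclideanSpace ℝ ((Fin m × Fin d) ⊕ (Fin m × Fin n)),
      ‖gradient H v - gradient H v'‖
        ≤ (m * ((⨆ i, sigmaMax (A i)) ^ 2 + sigmaMax W ^ 2) / θ) * ‖v - v'‖ := by
  classical
  -- the linear part as a continuous linear map
  set bL : EuclideanSpace ℝ ((Fin m × Fin d) ⊕ (Fin m × Fin n)) →L[ℝ] ℝ := ∑ p : Fin m × Fin n, b p • EuclideanSpace.proj (Sum.inr p) with hbL
  have bL_apply : ∀ v : EuclideanSpace ℝ ((Fin m × Fin d) ⊕ (Fin m × Fin n)), bL v = ∑ p : Fin m × Fin n, v (Sum.inr p) * b p := by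
    intro v
    simp [hbL, ContinuousLinearMap.sum_apply, PiLp.proj_apply, mul_comm]
  have hRHS_nonneg : (0:ℝ) ≤ m * ((⨆ i, sigmaMax (A i)) ^ 2 + sigmaMax W ^ 2) / θ := by
    apply div_nonneg _ hθ.le
    exact mul_nonneg (Nat.cast_nonneg _) (add_nonneg (sq_nonneg _) (sq_nonneg _))
  rcases Nat.eq_zero_or_pos d with hd | hd
  · -- degenerate case: `d = 0`, `H` is affine
    subst hd
    have hH0 : H = fun v => bL v := by
      rw [hH]; funext v
      simp [bL_apply, Finset.univ_eq_empty, Real.log_zero]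
    rw [hH0]
    refine ⟨bL.differentiable, fun v v' => ?_⟩
    have hgrad : ∀ u : EuclideanSpace ℝ ((Fin m × Fin 0) ⊕ (Fin m × Fin n)), gradient (fun v : EuclideanSpace ℝ ((Fin m × Fin 0) ⊕ (Fin m × Fin n)) => bL v) u
        = (InnerProductSpace.toDual ℝ (EuclideanSpace ℝ ((Fin m × Fin 0) ⊕ (Fin m × Fin n)))).symm bL := by
      intro u
      have h : fderiv ℝ (fun v : EuclideanSpace ℝ ((Fin m × Fin 0) ⊕ (Fin m × Fin n)) => bL v) u = bL := bL.fderiv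
      unfold gradient
      rw [h]
    rw [hgrad v, hgrad v', sub_self]
    simpa using mul_nonneg hRHS_nonneg (norm_nonneg (v - v'))
  · -- main case
    haveI : Nonempty (Fin d) := Fin.pos_iff_nonempty.mp hd
    set Λ : Fin m → Fin d → EuclideanSpace ℝ ((Fin m × Fin d) ⊕ (Fin m × Fin n)) →L[ℝ] ℝ := fun i j =>
      (∑ q : Fin m × Fin d, bigW (i, j) q • EuclideanSpace.proj (Sum.inl q))
      + (∑ q : Fin m × Fin n, bigA q (i, j) • EuclideanSpace.proj (Sum.inr q)) with hΛdef
    have Λ_apply : ∀ (i : Fin m) (j : Fin d) (v : EuclideanSpace ℝ ((Fin m × Fin d) ⊕ (Fin m × Fin n))),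
        Λ i j v = (bigW *ᵥ (fun p => v (Sum.inl p))) (i, j)
          + (bigAᵀ *ᵥ (fun p => v (Sum.inr p))) (i, j) := by
      intro i j v
      simp [hΛdef, Matrix.mulVec, dotProduct, Matrix.transpose_apply,
        ContinuousLinearMap.sum_apply]
    have hHeq : H = fun v => bL v + ∑ i, θ * Real.log (sVal θ Λ i v) := by
      rw [hH]; funext v
      rw [bL_apply]
      congr 1
      refine Finset.sum_congr rfl fun i _ => ?_
      congr 1
      congr 1
      rw [sVal]
      exact Finset.sum_congr rfl fun j _ => by rw [Λ_apply]
    have hDeriv : ∀ v : EuclideanSpace ℝ ((Fin m × Fin d) ⊕ (Fin m × Fin n)), HasFDerivAt H (dFun θ Λ bL v) v := by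
      intro v
      rw [hHeq]
      exact hasFDerivAt_dual θ Λ bL v
    refine ⟨fun v => (hDeriv v).differentiableAt, fun v v' => ?_⟩
    -- the constant
    set σA : ℝ := ⨆ i, sigmaMax (A i) with hσA
    have hσA_le : ∀ i, sigmaMax (A i) ≤ σA := by
      intro i
      rw [hσA]
      exact le_ciSup (Set.Finite.bddAbove (Set.finite_range fun i => sigmaMax (A i))) i
    have hσA_nonneg : 0 ≤ σA := (sigmaMax_nonneg (A ⟨0, hm⟩)).trans (hσA_le ⟨0, hm⟩)
    have hc0 : 0 ≤ σA ^ 2 + sigmaMax W ^ 2 := add_nonneg (sq_nonneg _) (sq_nonneg _)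
    -- the key quadratic bound
    have hΛsum : ∀ w : EuclideanSpace ℝ ((Fin m × Fin d) ⊕ (Fin m × Fin n)), ∑ i, ∑ j, (Λ i j w) ^ 2 ≤ (σA ^ 2 + sigmaMax W ^ 2) * ‖w‖ ^ 2 := by
      intro w
      set z : Fin m × Fin d → ℝ := fun p => w (Sum.inl p) with hz
      set s : Fin m × Fin n → ℝ := fun p => w (Sum.inr p) with hs
      have hsum_eq : ∑ i, ∑ j, (Λ i j w) ^ 2
          = ∑ p : Fin m × Fin d, ((bigW *ᵥ z) p + (bigAᵀ *ᵥ s) p) ^ 2 := by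
        rw [Fintype.sum_prod_type]
        exact Finset.sum_congr rfl fun i _ => Finset.sum_congr rfl fun j _ => by
          rw [Λ_apply]
      -- bound for the W-part
      have hWpart : ∑ p : Fin m × Fin d, ((bigW *ᵥ z) p) ^ 2
          ≤ sigmaMax W ^ 2 * ∑ p : Fin m × Fin d, (z p) ^ 2 := by
        have hentry : ∀ (i : Fin m) (j : Fin d),
            (bigW *ᵥ z) (i, j) = (W *ᵥ fun i' => z (i', j)) i := by
          intro i j
          subst hbigW
          simp [Matrix.mulVec, dotProduct, Fintype.sum_prod_type, Matrix.one_apply,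
            mul_ite, mul_one, mul_zero, Finset.sum_ite_eq]
        calc ∑ p : Fin m × Fin d, ((bigW *ᵥ z) p) ^ 2
            = ∑ j : Fin d, ∑ i : Fin m, ((W *ᵥ fun i' => z (i', j)) i) ^ 2 := by
              rw [Fintype.sum_prod_type, Finset.sum_comm]
              exact Finset.sum_congr rfl fun j _ => Finset.sum_congr rfl fun i _ => by
                rw [hentry]
          _ ≤ ∑ j : Fin d, sigmaMax W ^ 2 * ∑ i : Fin m, (z (i, j)) ^ 2 :=
              Finset.sum_le_sum fun j _ => mulVec_sq_sum_le W _
          _ = sigmaMax W ^ 2 * ∑ p : Fin m × Fin d, (z p) ^ 2 := by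
              rw [← Finset.mul_sum, Fintype.sum_prod_type, Finset.sum_comm]
      -- bound for the A-part
      have hApart : ∑ p : Fin m × Fin d, ((bigAᵀ *ᵥ s) p) ^ 2
          ≤ σA ^ 2 * ∑ q : Fin m × Fin n, (s q) ^ 2 := by
        have hentry : ∀ (i : Fin m) (j : Fin d),
            (bigAᵀ *ᵥ s) (i, j) = ((A i)ᵀ *ᵥ fun k => s (i, k)) j := by
          intro i j
          subst hbigA
          simp [Matrix.mulVec, dotProduct, Matrix.transpose_apply, Fintype.sum_prod_type,
            ite_mul, zero_mul, Finset.sum_ite_eq, eq_comm]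
        calc ∑ p : Fin m × Fin d, ((bigAᵀ *ᵥ s) p) ^ 2
            = ∑ i : Fin m, ∑ j : Fin d, (((A i)ᵀ *ᵥ fun k => s (i, k)) j) ^ 2 := by
              rw [Fintype.sum_prod_type]
              exact Finset.sum_congr rfl fun i _ => Finset.sum_congr rfl fun j _ => by
                rw [hentry]
          _ ≤ ∑ i : Fin m, sigmaMax (A i) ^ 2 * ∑ k : Fin n, (s (i, k)) ^ 2 := by
              refine Finset.sum_le_sum fun i _ => ?_
              have := mulVec_sq_sum_le (A i)ᵀ (fun k => s (i, k))
              rwa [sigmaMax_transpose] at this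
          _ ≤ ∑ i : Fin m, σA ^ 2 * ∑ k : Fin n, (s (i, k)) ^ 2 := by
              refine Finset.sum_le_sum fun i _ => ?_
              refine mul_le_mul_of_nonneg_right ?_
                (Finset.sum_nonneg fun k _ => sq_nonneg _)
              exact pow_le_pow_left₀ (sigmaMax_nonneg _) (hσA_le i) 2
          _ = σA ^ 2 * ∑ q : Fin m × Fin n, (s q) ^ 2 := by
              rw [← Finset.mul_sum, Fintype.sum_prod_type]
      -- norm decomposition
      have hnorm : ‖w‖ ^ 2 = (∑ p : Fin m × Fin d, (z p) ^ 2)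
          + ∑ q : Fin m × Fin n, (s q) ^ 2 := by
        rw [euclid_norm_sq, Fintype.sum_sum_type]
      -- put it together
      set Z : ℝ := ∑ p : Fin m × Fin d, (z p) ^ 2 with hZ
      set S : ℝ := ∑ q : Fin m × Fin n, (s q) ^ 2 with hS
      have hZ0 : 0 ≤ Z := Finset.sum_nonneg fun p _ => sq_nonneg _
      have hS0 : 0 ≤ S := Finset.sum_nonneg fun q _ => sq_nonneg _
      have hXle : Real.sqrt (∑ p : Fin m × Fin d, ((bigW *ᵥ z) p) ^ 2)
          ≤ sigmaMax W * Real.sqrt Z := by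
        refine (Real.sqrt_le_sqrt hWpart).trans ?_
        rw [Real.sqrt_mul (sq_nonneg _), Real.sqrt_sq (sigmaMax_nonneg W)]
      have hYle : Real.sqrt (∑ p : Fin m × Fin d, ((bigAᵀ *ᵥ s) p) ^ 2)
          ≤ σA * Real.sqrt S := by
        refine (Real.sqrt_le_sqrt hApart).trans ?_
        rw [Real.sqrt_mul (sq_nonneg _), Real.sqrt_sq hσA_nonneg]
      calc ∑ i, ∑ j, (Λ i j w) ^ 2
          = ∑ p : Fin m × Fin d, ((bigW *ᵥ z) p + (bigAᵀ *ᵥ s) p) ^ 2 := hsum_eq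
        _ ≤ (Real.sqrt (∑ p : Fin m × Fin d, ((bigW *ᵥ z) p) ^ 2)
              + Real.sqrt (∑ p : Fin m × Fin d, ((bigAᵀ *ᵥ s) p) ^ 2)) ^ 2 :=
            sum_sq_add_le _ _
        _ ≤ (sigmaMax W * Real.sqrt Z + σA * Real.sqrt S) ^ 2 := by
            refine pow_le_pow_left₀ (by positivity) (add_le_add hXle hYle) 2
        _ ≤ (σA ^ 2 + sigmaMax W ^ 2) * ‖w‖ ^ 2 := by
            rw [hnorm]
            nlinarith [sq_nonneg (sigmaMax W * Real.sqrt S - σA * Real.sqrt Z),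
              Real.sq_sqrt hZ0, Real.sq_sqrt hS0, Real.sqrt_nonneg Z, Real.sqrt_nonneg S,
              mul_nonneg (sigmaMax_nonneg W) (Real.sqrt_nonneg Z),
              mul_nonneg hσA_nonneg (Real.sqrt_nonneg S)]
      -- Lipschitz bound for the derivative
    have hlip := dFun_lipschitz hθ Λ bL hc0 hΛsum v v'
    have hfd : ∀ u : EuclideanSpace ℝ ((Fin m × Fin d) ⊕ (Fin m × Fin n)), fderiv ℝ H u = dFun θ Λ bL u := fun u => (hDeriv u).fderiv
    have hgrad_eq : gradient H v - gradient H v'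
        = (InnerProductSpace.toDual ℝ (EuclideanSpace ℝ ((Fin m × Fin d) ⊕ (Fin m × Fin n)))).symm (dFun θ Λ bL v - dFun θ Λ bL v') := by
      unfold gradient
      rw [hfd v, hfd v', map_sub]
    rw [hgrad_eq, LinearIsometryEquiv.norm_map]
    refine hlip.trans ?_
    refine mul_le_mul_of_nonneg_right ?_ (norm_nonneg _)
    have hle : σA ^ 2 + sigmaMax W ^ 2 ≤ (m : ℝ) * (σA ^ 2 + sigmaMax W ^ 2) :=
      le_mul_of_one_le_left hc0 (by exact_mod_cast hm)
    gcongr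
end

section
/- Let θ > 0, q ≥ 1, let W ∈ ℝ^{m×m} be a symmetric positive semi-definite matrix, and let A_1, …, A_m ∈ ℝ^{n×d}. Set 𝐖 = W ⊗ I_d and 𝐀 = diag[A_1, …, A_m]. Let x* ∈ Δ_d have strictly positive components and set 𝐱* = 𝟏_m ⊗ x*. Suppose z* ∈ ℝ^{md} and s* ∈ ℝ^{mn} satisfy −𝐖z* − 𝐀^⊤s* = θ(log 𝐱* + 𝟏_{md}), ‖s*‖_q ≤ 1, and z* is orthogonal to the kernel of 𝐖. Then ‖z*‖_2² ≤ ( 2θ²·m·‖log x* + 𝟏_d‖_2² + 2σ_max²(𝒜)·max(1, (mn)^{(1 − 2/q)}) ) / (λ_min⁺(W))², where σ_max(𝒜) = max_{i=1,…,m} σ_max(A_i) and λ_min⁺(W) is the smallest nonzero eigenvalue of W. -/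
open scoped Kronecker Matrix

/-- The smallest nonzero eigenvalue of a matrix. -/
noncomputable def lambdaMinPos {α : Type*} [Fintype α] (M : Matrix α α ℝ) : ℝ :=
  sInf {μ : ℝ | μ ≠ 0 ∧ ∃ v : α → ℝ, v ≠ 0 ∧ M *ᵥ v = μ • v}

section DualBoundHelpers

open Matrix
open scoped RealInnerProductSpace

/-- The identity between plain vectors and Euclidean space. -/
noncomputable def dualBoundToE {k : ℕ} (x : Fin k → ℝ) : EuclideanSpace ℝ (Fin k) :=
  (WithLp.equiv 2 (Fin k → ℝ)).symm x

lemma dualBound_dot_eq_inner {k : ℕ} (x y : Fin k → ℝ) :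
    x ⬝ᵥ y = ⟪dualBoundToE x, dualBoundToE y⟫ := by
  simp [dualBoundToE, PiLp.inner_apply, RCLike.inner_apply, dotProduct]
  exact Finset.sum_congr rfl fun i _ => mul_comm _ _

lemma dualBound_dot_self_nonneg {k : ℕ} (x : Fin k → ℝ) : 0 ≤ x ⬝ᵥ x :=
  Finset.sum_nonneg fun _ _ => mul_self_nonneg _

lemma dualBound_main_spec {m : ℕ} {W : Matrix (Fin m) (Fin m) ℝ} (hW : W.PosSemidef) :
    (∀ v, W *ᵥ v = 0) ∨ (0 < lambdaMinPos W ∧ ∀ c : Fin m → ℝ,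
      (∀ u, W *ᵥ u = 0 → c ⬝ᵥ u = 0) →
      lambdaMinPos W ^ 2 * (c ⬝ᵥ c) ≤ (W *ᵥ c) ⬝ᵥ (W *ᵥ c)) := by
  have hH := hW.1
  set toE := fun x : Fin m → ℝ => dualBoundToE x with htoE
  set S := {μ : ℝ | μ ≠ 0 ∧ ∃ v : Fin m → ℝ, v ≠ 0 ∧ W *ᵥ v = μ • v} with hS
  set b := hH.eigenvectorBasis with hb
  set μ := hH.eigenvalues with hμ
  have hSpos : ∀ x ∈ S, 0 < x := by
    rintro x ⟨hx0, v, hv0, hveq⟩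
    have h1 : 0 ≤ star v ⬝ᵥ (W *ᵥ v) := hW.dotProduct_mulVec_nonneg v
    rw [hveq] at h1
    simp only [star_trivial] at h1
    have h2 : v ⬝ᵥ (x • v) = x * (v ⬝ᵥ v) := by
      simp [dotProduct, Finset.mul_sum, Pi.smul_apply]; ring_nf
      exact Finset.sum_congr rfl fun i _ => by ring
    rw [h2] at h1
    have h3 : 0 < v ⬝ᵥ v := by
      rcases lt_or_eq_of_le (dualBound_dot_self_nonneg v) with h | h
      · exact h
      · exact absurd ((dotProduct_self_eq_zero).1 h.symm) hv0
    rcases hx0.lt_or_gt with h | h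
    · nlinarith
    · exact h
  have key : ∀ c : Fin m → ℝ,
      toE (W *ᵥ c) = ∑ i, (μ i * b.repr (toE c) i) • b i := by
    intro c
    set a : Fin m → ℝ := fun i => (b.repr (toE c) : EuclideanSpace ℝ (Fin m)) i with ha
    have hsum : ∑ i, a i • b i = toE c := b.sum_repr (toE c)
    have h1 : toE (W *ᵥ c) = Matrix.toEuclideanLin W (toE c) := rfl
    rw [h1, ← hsum, map_sum]
    refine Finset.sum_congr rfl fun i _ => ?_
    have h2 : Matrix.toEuclideanLin W (b i) = toE (W *ᵥ ⇑(b i)) := rfl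
    rw [_root_.map_smul, h2, hH.mulVec_eigenvectorBasis]
    show a i • (μ i • b i) = _
    rw [smul_smul, mul_comm, hsum]
  have heig : ∀ i, μ i = 0 ∨ μ i ∈ S := by
    intro i
    rcases eq_or_ne (μ i) 0 with h | h
    · exact Or.inl h
    · refine Or.inr ⟨h, ⇑(b i), ?_, hH.mulVec_eigenvectorBasis i⟩
      intro hz
      exact b.orthonormal.ne_zero i (by ext j; exact congrFun hz j)
  have hSsub : S ⊆ Set.range μ := by
    rintro x ⟨hx0, v, hv0, hveq⟩
    set a : Fin m → ℝ := fun i => (b.repr (toE v) : EuclideanSpace ℝ (Fin m)) i with ha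
    have hex : ∃ j, a j ≠ 0 := by
      by_contra h
      push_neg at h
      have : toE v = 0 := by
        rw [← b.sum_repr (toE v)]
        simp only [← ha]
        simp [h]
      exact hv0 ((WithLp.toLp_eq_zero 2 (x := v)).1 this)
    obtain ⟨j, hj⟩ := hex
    have h1 : b.repr (toE (W *ᵥ v)) j = μ j * a j := by
      rw [b.repr_apply_apply, key v, b.orthonormal.inner_right_fintype]
    have h2 : b.repr (toE (W *ᵥ v)) j = x * a j := by
      have h3 : toE (W *ᵥ v) = x • toE v := by rw [hveq]; rfl
      rw [h3, _root_.map_smul]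
      simp [ha]
    exact ⟨j, mul_right_cancel₀ hj (h1.symm.trans h2)⟩
  have hlam : lambdaMinPos W = sInf S := rfl
  have hrepr : ∀ c : Fin m → ℝ, ∀ i,
      (b.repr (toE (W *ᵥ c)) : EuclideanSpace ℝ (Fin m)) i
        = μ i * (b.repr (toE c) : EuclideanSpace ℝ (Fin m)) i := by
    intro c i
    rw [b.repr_apply_apply, key c, b.orthonormal.inner_right_fintype]
  have hinner : ∀ x : EuclideanSpace ℝ (Fin m),
      ⟪x, x⟫ = ∑ i, ((b.repr x : EuclideanSpace ℝ (Fin m)) i) ^ 2 := by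
    intro x
    have h := b.repr.inner_map_map x x
    simp only [PiLp.inner_apply, RCLike.inner_apply, starRingEnd_apply, star_trivial] at h ⊢
    rw [← h]
    exact Finset.sum_congr rfl fun i _ => (sq _).symm
  by_cases hne : S.Nonempty
  · right
    have hfin : S.Finite := (Set.finite_range μ).subset hSsub
    have hmem : sInf S ∈ S := hne.csInf_mem hfin
    have hpos : 0 < lambdaMinPos W := by rw [hlam]; exact hSpos _ hmem
    refine ⟨hpos, fun c hc => ?_⟩
    have hbdd : BddBelow S := ⟨0, fun x hx => (hSpos x hx).le⟩
    have hcc : c ⬝ᵥ c = ∑ i, ((b.repr (toE c) : EuclideanSpace ℝ (Fin m)) i) ^ 2 := by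
      rw [dualBound_dot_eq_inner]; exact hinner _
    have hyy : (W *ᵥ c) ⬝ᵥ (W *ᵥ c)
        = ∑ i, (μ i * (b.repr (toE c) : EuclideanSpace ℝ (Fin m)) i) ^ 2 := by
      rw [dualBound_dot_eq_inner, hinner]
      exact Finset.sum_congr rfl fun i _ => by rw [hrepr c i]
    rw [hcc, hyy, Finset.mul_sum]
    refine Finset.sum_le_sum fun i _ => ?_
    rcases eq_or_ne ((b.repr (toE c) : EuclideanSpace ℝ (Fin m)) i) 0 with h0 | h0
    · simp [h0]
    · have hμi : μ i ≠ 0 := by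
        intro hz
        have hker : W *ᵥ ⇑(b i) = 0 := by
          rw [hH.mulVec_eigenvectorBasis, ← hμ, hz, zero_smul]
        have hcb := hc _ hker
        rw [dualBound_dot_eq_inner] at hcb
        apply h0
        rw [b.repr_apply_apply, real_inner_comm]
        exact hcb
      have hμS : μ i ∈ S := (heig i).resolve_left hμi
      have h1 : lambdaMinPos W ≤ μ i := by rw [hlam]; exact csInf_le hbdd hμS
      have h2 : lambdaMinPos W ^ 2 ≤ μ i ^ 2 := by nlinarith [hpos.le, h1]
      rw [mul_pow]
      exact mul_le_mul_of_nonneg_right h2 (sq_nonneg _)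
  · left
    intro v
    have hz : ∀ i, μ i = 0 := fun i => (heig i).resolve_right fun h => hne ⟨_, h⟩
    have h0 : toE (W *ᵥ v) = 0 := by
      rw [key v]
      simp [hz]
    funext j
    exact congrFun (congrArg (WithLp.equiv 2 (Fin m → ℝ)) h0) j

lemma dualBound_transpose_mulVec_bound {n d : ℕ} (C : Matrix (Fin n) (Fin d) ℝ)
    (w : Fin n → ℝ) :
    (Cᵀ *ᵥ w) ⬝ᵥ (Cᵀ *ᵥ w) ≤ sigmaMax C ^ 2 * (w ⬝ᵥ w) := by
  set u := Cᵀ *ᵥ w with hu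
  have hCu : ∀ v : Fin d → ℝ, ‖dualBoundToE (C *ᵥ v)‖ ≤ sigmaMax C * ‖dualBoundToE v‖ := by
    intro v
    have h : dualBoundToE (C *ᵥ v)
        = (LinearMap.toContinuousLinearMap (Matrix.toEuclideanLin C)) (dualBoundToE v) := rfl
    rw [h]
    exact (LinearMap.toContinuousLinearMap _).le_opNorm _
  have h1 : u ⬝ᵥ u = (C *ᵥ u) ⬝ᵥ w := by
    rw [hu]
    rw [dotProduct_mulVec, Matrix.vecMul_transpose]
  have h2 : (C *ᵥ u) ⬝ᵥ w ≤ ‖dualBoundToE (C *ᵥ u)‖ * ‖dualBoundToE w‖ := by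
    rw [dualBound_dot_eq_inner]; exact real_inner_le_norm _ _
  have h3 : u ⬝ᵥ u = ‖dualBoundToE u‖ ^ 2 := by
    rw [dualBound_dot_eq_inner]; exact real_inner_self_eq_norm_sq _
  have h4 : w ⬝ᵥ w = ‖dualBoundToE w‖ ^ 2 := by
    rw [dualBound_dot_eq_inner]; exact real_inner_self_eq_norm_sq _
  have h5 : ‖dualBoundToE u‖ ^ 2 ≤ sigmaMax C * ‖dualBoundToE u‖ * ‖dualBoundToE w‖ := by
    calc ‖dualBoundToE u‖ ^ 2 = u ⬝ᵥ u := h3.symm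
    _ = (C *ᵥ u) ⬝ᵥ w := h1
    _ ≤ ‖dualBoundToE (C *ᵥ u)‖ * ‖dualBoundToE w‖ := h2
    _ ≤ (sigmaMax C * ‖dualBoundToE u‖) * ‖dualBoundToE w‖ :=
        mul_le_mul_of_nonneg_right (hCu u) (norm_nonneg _)
  rw [h3, h4]
  nlinarith [sq_nonneg (sigmaMax C * ‖dualBoundToE w‖ - ‖dualBoundToE u‖),
    norm_nonneg (dualBoundToE u), norm_nonneg (dualBoundToE w),
    norm_nonneg (LinearMap.toContinuousLinearMap (Matrix.toEuclideanLin C))]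

lemma dualBound_sum_sq_le_of_Lq {ι : Type*} [Fintype ι] (s : ι → ℝ) (q : ℝ) (hq : 1 ≤ q)
    (hsq : (∑ p, |s p| ^ q) ^ (1 / q) ≤ 1) :
    ∑ p, s p ^ 2 ≤ max 1 ((Fintype.card ι : ℝ) ^ (1 - 2 / q)) := by
  have hq0 : 0 < q := lt_of_lt_of_le zero_lt_one hq
  have hnn : 0 ≤ ∑ p, |s p| ^ q :=
    Finset.sum_nonneg fun p _ => Real.rpow_nonneg (abs_nonneg _) q
  have hsum1 : ∑ p, |s p| ^ q ≤ 1 := by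
    have h := Real.rpow_le_rpow (Real.rpow_nonneg hnn _) hsq hq0.le
    rwa [← Real.rpow_mul hnn, one_div, inv_mul_cancel₀ hq0.ne', Real.rpow_one,
      Real.one_rpow] at h
  rcases le_or_gt q 2 with hq2 | hq2
  · refine le_trans (le_trans ?_ hsum1) (le_max_left _ _)
    refine Finset.sum_le_sum fun p _ => ?_
    rcases eq_or_ne (s p) 0 with h0 | h0
    · simp [h0, Real.zero_rpow hq0.ne']
    · have habs : 0 < |s p| := abs_pos.2 h0
      have hle1 : |s p| ≤ 1 := by
        by_contra h
        push_neg at h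
        have hgt : (1 : ℝ) < |s p| ^ q :=
          Real.one_lt_rpow_iff_of_pos habs |>.2 (Or.inl ⟨h, hq0⟩)
        have hone : |s p| ^ q ≤ ∑ p', |s p'| ^ q :=
          Finset.single_le_sum (fun p' _ => Real.rpow_nonneg (abs_nonneg _) q)
            (Finset.mem_univ p)
        linarith
      have hmono : |s p| ^ (2 : ℝ) ≤ |s p| ^ q :=
        Real.rpow_le_rpow_of_exponent_ge habs hle1 hq2
      calc s p ^ 2 = |s p| ^ (2 : ℕ) := by rw [sq_abs]
      _ = |s p| ^ ((2 : ℕ) : ℝ) := (Real.rpow_natCast _ 2).symm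
      _ ≤ |s p| ^ q := by exact_mod_cast hmono
  · have hpq : (q / 2).HolderConjugate ((q / 2) / (q / 2 - 1)) :=
      Real.HolderConjugate.conjExponent (by linarith)
    have hH := Real.inner_le_Lp_mul_Lq (s := Finset.univ) (fun p => s p ^ 2) (fun _ => 1) hpq
    simp only [mul_one, abs_one] at hH
    have e1 : ∀ p : ι, |s p ^ 2| ^ (q / 2) = |s p| ^ q := by
      intro p
      rw [abs_pow, ← Real.rpow_natCast |s p| 2, ← Real.rpow_mul (abs_nonneg _)]
      congr 1
      push_cast
      ring
    have hq2' : (0:ℝ) < q / 2 - 1 := by linarith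
    have hqne : q ≠ 0 := hq0.ne'
    have econj : 1 / (q / 2 / (q / 2 - 1)) = 1 - 2 / q := by
      rw [one_div, inv_div]
      rw [div_eq_iff (by positivity : q / 2 ≠ 0)]
      field_simp
    have e2 : (∑ p, |s p ^ 2| ^ (q / 2)) ^ (1 / (q / 2)) ≤ 1 := by
      simp_rw [e1]
      exact Real.rpow_le_one hnn hsum1 (by positivity)
    have e3 : (∑ _p : ι, (1:ℝ) ^ (q / 2 / (q / 2 - 1))) ^ (1 / (q / 2 / (q / 2 - 1)))
        = (Fintype.card ι : ℝ) ^ (1 - 2 / q) := by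
      rw [← econj]
      congr 1
      simp [Real.one_rpow, Finset.sum_const, nsmul_eq_mul]
    have e4 : (0:ℝ) ≤ (∑ _p : ι, (1:ℝ) ^ (q / 2 / (q / 2 - 1))) ^ (1 / (q / 2 / (q / 2 - 1))) :=
      Real.rpow_nonneg (Finset.sum_nonneg fun _ _ => by positivity) _
    calc ∑ p, s p ^ 2 ≤ _ := hH
    _ ≤ 1 * ((Fintype.card ι : ℝ) ^ (1 - 2 / q)) := by
        rw [← e3]
        exact mul_le_mul_of_nonneg_right e2 e4
    _ = (Fintype.card ι : ℝ) ^ (1 - 2 / q) := one_mul _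
    _ ≤ max 1 ((Fintype.card ι : ℝ) ^ (1 - 2 / q)) := le_max_right _ _

end DualBoundHelpers

/-- Let `θ > 0`, `q ≥ 1`, `W` symmetric PSD, `𝐖 = W ⊗ I_d`,
`𝐀 = diag[A_1, …, A_m]`, `x* ∈ Δ_d` strictly positive, `𝐱* = 𝟏_m ⊗ x*`. If
`−𝐖z* − 𝐀ᵀs* = θ(log 𝐱* + 𝟏)`, `‖s*‖_q ≤ 1` and `z* ⊥ ker 𝐖`, then
`‖z*‖₂² ≤ (2θ²m‖log x* + 𝟏‖₂² + 2σ_max²(𝒜) max(1,(mn)^(1−2/q))) / (λ_min⁺(W))²`. -/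
theorem dual_block_solution_norm_bound
    {m n d : ℕ} (hm : 0 < m) (θ : ℝ) (hθ : 0 < θ) (q : ℝ) (hq : 1 ≤ q)
    (W : Matrix (Fin m) (Fin m) ℝ) (hWsymm : W.IsSymm) (hWpsd : W.PosSemidef)
    (A : Fin m → Matrix (Fin n) (Fin d) ℝ)
    (bigW : Matrix (Fin m × Fin d) (Fin m × Fin d) ℝ)
    (hbigW : bigW = W ⊗ₖ (1 : Matrix (Fin d) (Fin d) ℝ))
    (bigA : Matrix (Fin m × Fin n) (Fin m × Fin d) ℝ)
    (hbigA : bigA = Matrix.of fun p r => if p.1 = r.1 then A p.1 p.2 r.2 else 0)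
    (xstar : Fin d → ℝ) (hxstar : xstar ∈ stdSimplex ℝ (Fin d))
    (hxpos : ∀ i, 0 < xstar i)
    (zstar : Fin m × Fin d → ℝ) (sstar : Fin m × Fin n → ℝ)
    (heq : -(bigW *ᵥ zstar) - bigAᵀ *ᵥ sstar
      = fun p => θ * (Real.log (xstar p.2) + 1))
    (hsq : (∑ p, |sstar p| ^ q) ^ (1 / q) ≤ 1)
    (horth : ∀ v : Fin m × Fin d → ℝ, bigW *ᵥ v = 0 → zstar ⬝ᵥ v = 0) :
    zstar ⬝ᵥ zstar
      ≤ (2 * θ ^ 2 * m * (∑ i, (Real.log (xstar i) + 1) ^ 2)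
          + 2 * (⨆ i, sigmaMax (A i)) ^ 2 * max 1 (((m : ℝ) * n) ^ (1 - 2 / q)))
        / lambdaMinPos W ^ 2 := by
    classical
  have hmaxnn : (0:ℝ) ≤ max 1 (((m : ℝ) * n) ^ (1 - 2 / q)) :=
    le_trans zero_le_one (le_max_left _ _)
  have hσnn : 0 ≤ ⨆ i, sigmaMax (A i) := by
    have h0 : (0:ℝ) ≤ sigmaMax (A (⟨0, hm⟩ : Fin m)) := norm_nonneg _
    exact le_trans h0
      (le_ciSup (f := fun i => sigmaMax (A i)) (Set.finite_range _).bddAbove _)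
  have hNUMnn : 0 ≤ 2 * θ ^ 2 * m * (∑ i, (Real.log (xstar i) + 1) ^ 2)
      + 2 * (⨆ i, sigmaMax (A i)) ^ 2 * max 1 (((m : ℝ) * n) ^ (1 - 2 / q)) := by
    have h1 : (0:ℝ) ≤ 2 * θ ^ 2 * m * (∑ i, (Real.log (xstar i) + 1) ^ 2) := by positivity
    have h2 : (0:ℝ) ≤ 2 * (⨆ i, sigmaMax (A i)) ^ 2 * max 1 (((m : ℝ) * n) ^ (1 - 2 / q)) := by
      have := sq_nonneg (⨆ i, sigmaMax (A i))
      nlinarith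
    linarith
  -- columns of zstar
  have hWcol : ∀ (r : Fin d) (k : Fin m),
      (bigW *ᵥ zstar) (k, r) = (W *ᵥ fun l => zstar (l, r)) k := by
    intro r k
    rw [hbigW]
    simp only [Matrix.mulVec, dotProduct, Fintype.sum_prod_type,
      Matrix.kroneckerMap_apply, Matrix.one_apply]
    refine Finset.sum_congr rfl fun l _ => ?_
    simp [mul_ite, ite_mul, mul_assoc]
  -- the equation componentwise
  have hy : ∀ p : Fin m × Fin d,
      (bigW *ᵥ zstar) p = -(θ * (Real.log (xstar p.2) + 1)) - (bigAᵀ *ᵥ sstar) p := by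
    intro p
    have h := congrFun heq p
    simp only [Pi.sub_apply, Pi.neg_apply] at h
    linarith
  -- block structure of bigAᵀ
  have hAt : ∀ p : Fin m × Fin d,
      (bigAᵀ *ᵥ sstar) p = ((A p.1)ᵀ *ᵥ fun j => sstar (p.1, j)) p.2 := by
    rintro ⟨k, r⟩
    rw [hbigA]
    simp only [Matrix.mulVec, dotProduct, Matrix.transpose_apply, Matrix.of_apply,
      Fintype.sum_prod_type]
    simp only [ite_mul, zero_mul]
    rw [Finset.sum_comm]
    refine Finset.sum_congr rfl fun j _ => ?_
    simp
  -- bound on the sstar part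
  have hApart : ∑ p : Fin m × Fin d, ((bigAᵀ *ᵥ sstar) p) ^ 2
      ≤ (⨆ i, sigmaMax (A i)) ^ 2 * max 1 (((m : ℝ) * n) ^ (1 - 2 / q)) := by
    have h1 : ∑ p : Fin m × Fin d, ((bigAᵀ *ᵥ sstar) p) ^ 2
        = ∑ k, ∑ r, (((A k)ᵀ *ᵥ fun j => sstar (k, j)) r) ^ 2 := by
      rw [Fintype.sum_prod_type]
      exact Finset.sum_congr rfl fun k _ => Finset.sum_congr rfl fun r _ => by
        rw [hAt (k, r)]
    have h2 : ∀ k : Fin m, ∑ r, (((A k)ᵀ *ᵥ fun j => sstar (k, j)) r) ^ 2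
        ≤ (⨆ i, sigmaMax (A i)) ^ 2 * ∑ j, sstar (k, j) ^ 2 := by
      intro k
      have hb := dualBound_transpose_mulVec_bound (A k) (fun j => sstar (k, j))
      have hd1 : ((A k)ᵀ *ᵥ fun j => sstar (k, j)) ⬝ᵥ ((A k)ᵀ *ᵥ fun j => sstar (k, j))
          = ∑ r, (((A k)ᵀ *ᵥ fun j => sstar (k, j)) r) ^ 2 := by
        simp [dotProduct, sq]
      have hd2 : (fun j => sstar (k, j)) ⬝ᵥ (fun j => sstar (k, j))
          = ∑ j, sstar (k, j) ^ 2 := by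
        simp [dotProduct, sq]
      rw [hd1, hd2] at hb
      refine le_trans hb ?_
      have hσk : sigmaMax (A k) ≤ ⨆ i, sigmaMax (A i) :=
        le_ciSup (f := fun i => sigmaMax (A i)) (Set.finite_range _).bddAbove k
      have hσ0 : (0:ℝ) ≤ sigmaMax (A k) := norm_nonneg _
      have hsq2 : sigmaMax (A k) ^ 2 ≤ (⨆ i, sigmaMax (A i)) ^ 2 := by nlinarith
      exact mul_le_mul_of_nonneg_right hsq2
        (Finset.sum_nonneg fun j _ => sq_nonneg _)
    have h3 : ∑ k, ∑ j, sstar (k, j) ^ 2 = ∑ p : Fin m × Fin n, sstar p ^ 2 := by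
      rw [Fintype.sum_prod_type]
    have h4 : ∑ p : Fin m × Fin n, sstar p ^ 2 ≤ max 1 (((m : ℝ) * n) ^ (1 - 2 / q)) := by
      have := dualBound_sum_sq_le_of_Lq sstar q hq hsq
      rwa [Fintype.card_prod, Fintype.card_fin, Fintype.card_fin, Nat.cast_mul] at this
    calc ∑ p : Fin m × Fin d, ((bigAᵀ *ᵥ sstar) p) ^ 2
        = ∑ k, ∑ r, (((A k)ᵀ *ᵥ fun j => sstar (k, j)) r) ^ 2 := h1
    _ ≤ ∑ k, (⨆ i, sigmaMax (A i)) ^ 2 * ∑ j, sstar (k, j) ^ 2 :=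
        Finset.sum_le_sum fun k _ => h2 k
    _ = (⨆ i, sigmaMax (A i)) ^ 2 * ∑ p : Fin m × Fin n, sstar p ^ 2 := by
        rw [← Finset.mul_sum, h3]
    _ ≤ (⨆ i, sigmaMax (A i)) ^ 2 * max 1 (((m : ℝ) * n) ^ (1 - 2 / q)) :=
        mul_le_mul_of_nonneg_left h4 (sq_nonneg _)
  -- bound on the log part
  have hbpart : ∑ p : Fin m × Fin d, (θ * (Real.log (xstar p.2) + 1)) ^ 2
      = θ ^ 2 * m * ∑ i, (Real.log (xstar i) + 1) ^ 2 := by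
    rw [Fintype.sum_prod_type]
    simp only [Finset.sum_const, Finset.card_univ, Fintype.card_fin, nsmul_eq_mul, mul_pow]
    rw [← Finset.mul_sum]
    ring
  -- total bound on ‖bigW z‖²
  have hsumy : ∑ p : Fin m × Fin d, ((bigW *ᵥ zstar) p) ^ 2
      ≤ 2 * θ ^ 2 * m * (∑ i, (Real.log (xstar i) + 1) ^ 2)
        + 2 * (⨆ i, sigmaMax (A i)) ^ 2 * max 1 (((m : ℝ) * n) ^ (1 - 2 / q)) := by
    have hstep : ∑ p : Fin m × Fin d, ((bigW *ᵥ zstar) p) ^ 2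
        ≤ ∑ p : Fin m × Fin d,
          (2 * (θ * (Real.log (xstar p.2) + 1)) ^ 2 + 2 * ((bigAᵀ *ᵥ sstar) p) ^ 2) := by
      refine Finset.sum_le_sum fun p _ => ?_
      rw [hy p]
      nlinarith [sq_nonneg (θ * (Real.log (xstar p.2) + 1) - (bigAᵀ *ᵥ sstar) p),
        sq_nonneg (θ * (Real.log (xstar p.2) + 1) + (bigAᵀ *ᵥ sstar) p)]
    rw [Finset.sum_add_distrib, ← Finset.mul_sum, ← Finset.mul_sum] at hstep
    rw [hbpart] at hstep
    nlinarith [hApart]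
  -- finish using the spectral lemma
  rcases dualBound_main_spec hWpsd with hdeg | ⟨hpos, hcb⟩
  · have hz0 : zstar ⬝ᵥ zstar = 0 := by
      apply horth
      funext p
      rcases p with ⟨k, r⟩
      rw [hWcol r k, hdeg]
      rfl
    rw [hz0]
    exact div_nonneg hNUMnn (sq_nonneg _)
  · have hzz : zstar ⬝ᵥ zstar = ∑ r, (fun l => zstar (l, r)) ⬝ᵥ (fun l => zstar (l, r)) := by
      simp only [dotProduct]
      rw [Fintype.sum_prod_type, Finset.sum_comm]
    have hyy : ∑ p : Fin m × Fin d, ((bigW *ᵥ zstar) p) ^ 2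
        = ∑ r, (W *ᵥ fun l => zstar (l, r)) ⬝ᵥ (W *ᵥ fun l => zstar (l, r)) := by
      rw [Fintype.sum_prod_type, Finset.sum_comm]
      refine Finset.sum_congr rfl fun r _ => ?_
      simp only [dotProduct]
      exact Finset.sum_congr rfl fun k _ => by rw [hWcol r k, sq]
    have hcolorth : ∀ r : Fin d, ∀ u : Fin m → ℝ, W *ᵥ u = 0 →
        (fun l => zstar (l, r)) ⬝ᵥ u = 0 := by
      intro r u hu
      have hker : bigW *ᵥ (fun p : Fin m × Fin d => if p.2 = r then u p.1 else 0) = 0 := by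
        funext p
        rcases p with ⟨k, t⟩
        rw [hbigW]
        simp only [Matrix.mulVec, dotProduct, Fintype.sum_prod_type,
          Matrix.kroneckerMap_apply, Matrix.one_apply, Pi.zero_apply]
        have hinner2 : ∀ l : Fin m,
            (∑ s : Fin d, W k l * (if t = s then (1:ℝ) else 0) * (if s = r then u l else 0))
            = if t = r then W k l * u l else 0 := by
          intro l
          rw [Finset.sum_eq_single t]
          · by_cases h : t = r <;> simp [h]
          · intro s _ hs
            simp [Ne.symm hs]
          · simp
        rw [Finset.sum_congr rfl fun l _ => hinner2 l]
        by_cases h : t = r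
        · simp only [h, if_true]
          have := congrFun hu k
          simpa [Matrix.mulVec, dotProduct] using this
        · simp [h]
      have hv := horth _ hker
      rw [show zstar ⬝ᵥ (fun p : Fin m × Fin d => if p.2 = r then u p.1 else 0)
          = (fun l => zstar (l, r)) ⬝ᵥ u from ?_] at hv
      · exact hv
      · simp only [dotProduct, Fintype.sum_prod_type]
        refine Finset.sum_congr rfl fun k _ => ?_
        rw [Finset.sum_eq_single r]
        · simp
        · intro s _ hs
          simp [hs]
        · simp
    have hfin : lambdaMinPos W ^ 2 * (zstar ⬝ᵥ zstar)
        ≤ 2 * θ ^ 2 * m * (∑ i, (Real.log (xstar i) + 1) ^ 2)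
          + 2 * (⨆ i, sigmaMax (A i)) ^ 2 * max 1 (((m : ℝ) * n) ^ (1 - 2 / q)) := by
      rw [hzz, Finset.mul_sum]
      calc ∑ r, lambdaMinPos W ^ 2 * ((fun l => zstar (l, r)) ⬝ᵥ (fun l => zstar (l, r)))
          ≤ ∑ r, (W *ᵥ fun l => zstar (l, r)) ⬝ᵥ (W *ᵥ fun l => zstar (l, r)) :=
            Finset.sum_le_sum fun r _ => hcb _ (hcolorth r)
      _ = ∑ p : Fin m × Fin d, ((bigW *ᵥ zstar) p) ^ 2 := hyy.symm
      _ ≤ _ := hsumy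
    rw [le_div_iff₀ (by positivity : (0:ℝ) < lambdaMinPos W ^ 2)]
    linarith [hfin]
end
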